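/- Let I be an ideal of R such that the Krull dimension of R/I equals 1 and suppose I is prime. Then for every a ∈ R \ I, the inverse system satisfies I^⊥ = a ∘ I^⊥; in particular I^⊥ = 𝔪 ∘ I^⊥, where 𝔪 = (x_1,…,x_n) is the maximal ideal of R, yet I^⊥ ≠ 0. -/

import Mathlib

/- Context: R = k[[x_1,…,x_n]] acting on Γ = k[y_1,…,y_n] by contraction:
`x^α ∘ y^β = y^{β-α}` if `α ≤ β` componentwise and `0` otherwise, extended
`k`-linearly. -/

open MvPolynomial

noncomputable def contract {n : ℕ} {k : Type} [Field k]
    (f : MvPowerSeries (Fin n) k) (F : MvPolynomial (Fin n) k) :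
    MvPolynomial (Fin n) k :=
  ∑ γ ∈ F.support, ∑ p ∈ Finset.HasAntidiagonal.antidiagonal γ,
    (MvPowerSeries.coeff p.1 f * MvPolynomial.coeff γ F) •
      MvPolynomial.monomial p.2 (1 : k)

variable {n : ℕ} {k : Type} [Field k]

theorem contract_zero (f : MvPowerSeries (Fin n) k) :
    contract f (0 : MvPolynomial (Fin n) k) = 0 := by
  simp [contract]

theorem zero_contract (F : MvPolynomial (Fin n) k) :
    contract (0 : MvPowerSeries (Fin n) k) F = 0 := by
  simp [contract]

theorem add_contract (f g : MvPowerSeries (Fin n) k) (F : MvPolynomial (Fin n) k) :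
    contract (f + g) F = contract f F + contract g F := by
  simp [contract, add_mul, add_smul, Finset.sum_add_distrib]

theorem one_contract (F : MvPolynomial (Fin n) k) : contract 1 F = F := by
  unfold contract
  conv_rhs => rw [← F.support_sum_monomial_coeff]
  refine Finset.sum_congr rfl fun γ hγ => ?_
  rw [Finset.sum_eq_single ((0 : Fin n →₀ ℕ), γ)]
  · simp [MvPowerSeries.coeff_one, MvPolynomial.smul_monomial]
  · rintro ⟨p1, p2⟩ hp hne
    rw [Finset.HasAntidiagonal.mem_antidiagonal] at hp
    have : p1 ≠ 0 := by
      rintro rfl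
      simp at hp
      exact hne (by simp [hp])
    simp [MvPowerSeries.coeff_one, this]
  · intro h
    exact absurd (Finset.HasAntidiagonal.mem_antidiagonal.mpr (by simp)) h

theorem contract_eq_sum_subset (f : MvPowerSeries (Fin n) k)
    (F : MvPolynomial (Fin n) k) {S : Finset (Fin n →₀ ℕ)} (hS : F.support ⊆ S) :
    contract f F = ∑ γ ∈ S, ∑ p ∈ Finset.HasAntidiagonal.antidiagonal γ,
      (MvPowerSeries.coeff p.1 f * MvPolynomial.coeff γ F) •
        MvPolynomial.monomial p.2 (1 : k) := by
  rw [contract]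
  refine Finset.sum_subset hS fun γ _ hγ => ?_
  have h0 : MvPolynomial.coeff γ F = 0 := MvPolynomial.notMem_support_iff.mp hγ
  simp [h0]

theorem contract_add (f : MvPowerSeries (Fin n) k) (F G : MvPolynomial (Fin n) k) :
    contract f (F + G) = contract f F + contract f G := by
  rw [contract_eq_sum_subset f (F + G) (S := F.support ∪ G.support)
      ((MvPolynomial.support_add (p := F) (q := G)).trans le_rfl),
    contract_eq_sum_subset f F (S := F.support ∪ G.support) Finset.subset_union_left,
    contract_eq_sum_subset f G (S := F.support ∪ G.support) Finset.subset_union_right,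
    ← Finset.sum_add_distrib]
  refine Finset.sum_congr rfl fun γ _ => ?_
  rw [← Finset.sum_add_distrib]
  refine Finset.sum_congr rfl fun p _ => ?_
  rw [MvPolynomial.coeff_add, mul_add, add_smul]

theorem coeff_contract (f : MvPowerSeries (Fin n) k) (F : MvPolynomial (Fin n) k)
    {S : Finset (Fin n →₀ ℕ)} (hS : F.support ⊆ S) (β : Fin n →₀ ℕ) :
    MvPolynomial.coeff β (contract f F) =
      ∑ γ ∈ S, if β ≤ γ then
        MvPowerSeries.coeff (γ - β) f * MvPolynomial.coeff γ F else 0 := by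
  rw [contract_eq_sum_subset f F hS, MvPolynomial.coeff_sum]
  refine Finset.sum_congr rfl fun γ _ => ?_
  rw [MvPolynomial.coeff_sum]
  by_cases hβγ : β ≤ γ
  · rw [Finset.sum_eq_single (γ - β, β)]
    · simp [MvPolynomial.coeff_smul, MvPolynomial.coeff_monomial, hβγ]
    · rintro ⟨p1, p2⟩ hp hne
      rw [Finset.HasAntidiagonal.mem_antidiagonal] at hp
      rw [MvPolynomial.coeff_smul, MvPolynomial.coeff_monomial]
      by_cases h2 : p2 = β
      · subst h2
        have h1 : p1 = γ - p2 := eq_tsub_of_add_eq hp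
        exact absurd (by rw [h1]) hne
      · simp [h2]
    · intro h
      exact absurd (Finset.HasAntidiagonal.mem_antidiagonal.mpr (tsub_add_cancel_of_le hβγ)) h
  · rw [if_neg hβγ]
    refine Finset.sum_eq_zero fun p hp => ?_
    rw [Finset.HasAntidiagonal.mem_antidiagonal] at hp
    rw [MvPolynomial.coeff_smul, MvPolynomial.coeff_monomial, if_neg, smul_zero]
    rintro rfl
    exact hβγ (hp ▸ le_add_self)

theorem support_contract_subset (g : MvPowerSeries (Fin n) k)
    (F : MvPolynomial (Fin n) k) :
    (contract g F).support ⊆ F.support.biUnion Finset.Iic := by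
  intro δ hδ
  rw [MvPolynomial.mem_support_iff,
    coeff_contract g F (le_refl F.support) δ] at hδ
  obtain ⟨γ, hγ, hne⟩ := Finset.exists_ne_zero_of_sum_ne_zero hδ
  refine Finset.mem_biUnion.mpr ⟨γ, hγ, Finset.mem_Iic.mpr ?_⟩
  by_contra h
  rw [if_neg h] at hne
  exact hne rfl

theorem mul_contract (f g : MvPowerSeries (Fin n) k) (F : MvPolynomial (Fin n) k) :
    contract (f * g) F = contract f (contract g F) := by
  classical
  set S : Finset (Fin n →₀ ℕ) := F.support.biUnion Finset.Iic with hSdef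
  have hFS : F.support ⊆ S := fun γ hγ =>
    Finset.mem_biUnion.mpr ⟨γ, hγ, Finset.mem_Iic.mpr le_rfl⟩
  apply MvPolynomial.ext
  intro β
  rw [coeff_contract (f * g) F hFS β,
    coeff_contract f (contract g F) (support_contract_subset g F) β]
  have key : ∀ δ ∈ S,
      (if β ≤ δ then MvPowerSeries.coeff (δ - β) f *
          MvPolynomial.coeff δ (contract g F) else 0) =
        ∑ γ ∈ F.support, (if β ≤ δ ∧ δ ≤ γ then
          MvPowerSeries.coeff (δ - β) f * MvPowerSeries.coeff (γ - δ) g *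
            MvPolynomial.coeff γ F else 0) := by
    intro δ _
    by_cases hβδ : β ≤ δ
    · rw [if_pos hβδ, coeff_contract g F (le_refl F.support) δ, Finset.mul_sum]
      refine Finset.sum_congr rfl fun γ _ => ?_
      by_cases hδγ : δ ≤ γ
      · rw [if_pos hδγ, if_pos ⟨hβδ, hδγ⟩, mul_assoc]
      · rw [if_neg hδγ, if_neg (fun h => hδγ h.2), mul_zero]
    · rw [if_neg hβδ]
      exact (Finset.sum_eq_zero fun γ _ => by
        rw [if_neg (fun h => hβδ h.1)]).symm
  rw [Finset.sum_congr rfl key, Finset.sum_comm,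
    ← Finset.sum_subset hFS (fun γ _ hγ => by
      rw [MvPolynomial.notMem_support_iff.mp hγ, mul_zero, ite_self])]
  refine Finset.sum_congr rfl fun γ hγ => ?_
  by_cases hβγ : β ≤ γ
  · rw [if_pos hβγ, MvPowerSeries.coeff_mul, Finset.sum_mul, ← Finset.sum_filter]
    refine Finset.sum_nbij' (fun p => β + p.1) (fun δ => (δ - β, γ - δ))
      ?_ ?_ ?_ ?_ ?_
    · rintro ⟨p1, p2⟩ hp
      rw [Finset.HasAntidiagonal.mem_antidiagonal] at hp
      have h1 : p1 ≤ γ - β := hp ▸ le_self_add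
      have h2 : β + p1 ≤ γ := by
        calc β + p1 ≤ β + (γ - β) := add_le_add_right h1 β
        _ = γ := add_tsub_cancel_of_le hβγ
      exact Finset.mem_filter.mpr
        ⟨Finset.mem_biUnion.mpr ⟨γ, hγ, Finset.mem_Iic.mpr h2⟩, le_self_add, h2⟩
    · intro δ hδ
      obtain ⟨-, hβδ, hδγ⟩ := Finset.mem_filter.mp hδ
      rw [Finset.HasAntidiagonal.mem_antidiagonal, add_comm]
      exact tsub_add_tsub_cancel hδγ hβδ
    · rintro ⟨p1, p2⟩ hp
      rw [Finset.HasAntidiagonal.mem_antidiagonal] at hp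
      have h3 : (β + p1) + p2 = γ := by
        rw [add_assoc, hp]
        exact add_tsub_cancel_of_le hβγ
      refine Prod.ext ?_ ?_
      · exact add_tsub_cancel_left β p1
      · exact (eq_tsub_of_add_eq (by rw [add_comm]; exact h3)).symm
    · intro δ hδ
      obtain ⟨-, hβδ, -⟩ := Finset.mem_filter.mp hδ
      exact add_tsub_cancel_of_le hβδ
    · rintro ⟨p1, p2⟩ hp
      rw [Finset.HasAntidiagonal.mem_antidiagonal] at hp
      have h3 : (β + p1) + p2 = γ := by
        rw [add_assoc, hp]
        exact add_tsub_cancel_of_le hβγ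
      rw [add_tsub_cancel_left β p1,
        ← (eq_tsub_of_add_eq (by rw [add_comm]; exact h3) : p2 = γ - (β + p1))]
  · rw [if_neg hβγ]
    exact (Finset.sum_eq_zero fun δ hδ => by
      rw [if_neg (fun h => hβγ (h.1.trans h.2))]).symm

/-- `Γ = k[y_1,…,y_n]` is a module over `R = k[[x_1,…,x_n]]` via contraction. -/
noncomputable instance contractModule :
    Module (MvPowerSeries (Fin n) k) (MvPolynomial (Fin n) k) where
  smul := contract
  one_smul := one_contract
  mul_smul := mul_contract
  smul_zero := contract_zero
  smul_add := contract_add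
  add_smul := add_contract
  zero_smul := zero_contract

theorem smul_def (f : MvPowerSeries (Fin n) k) (F : MvPolynomial (Fin n) k) :
    f • F = contract f F := rfl

/-- Macaulay's inverse system `I^⊥ = {F ∈ Γ : g ∘ F = 0 for all g ∈ I}`, an
`R`-submodule of `Γ`. -/
noncomputable def perp (I : Ideal (MvPowerSeries (Fin n) k)) :
    Submodule (MvPowerSeries (Fin n) k) (MvPolynomial (Fin n) k) where
  carrier := {F | ∀ g ∈ I, contract g F = 0}
  add_mem' := fun {F G} hF hG g hg => by
    rw [contract_add, hF g hg, hG g hg, add_zero]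
  zero_mem' := fun g _ => contract_zero g
  smul_mem' := fun c F hF g hg => by
    show contract g (contract c F) = 0
    rw [← mul_contract, mul_comm, mul_contract, hF g hg, contract_zero]

theorem mem_perp_iff {I : Ideal (MvPowerSeries (Fin n) k)}
    {F : MvPolynomial (Fin n) k} : F ∈ perp I ↔ ∀ g ∈ I, contract g F = 0 :=
  Iff.rfl




/-- weight (total degree) of an exponent vector -/
def wt {n : ℕ} (δ : Fin n →₀ ℕ) : ℕ := δ.sum fun _ e => e

lemma wt_add (δ ε : Fin n →₀ ℕ) : wt (δ + ε) = wt δ + wt ε := by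
  classical
  simp [wt, Finsupp.sum_add_index]

lemma wt_single (i : Fin n) (m : ℕ) : wt (Finsupp.single i m) = m := by
  simp [wt, Finsupp.sum_single_index]

lemma wt_eq_zero {δ : Fin n →₀ ℕ} : wt δ = 0 ↔ δ = 0 := by
  constructor
  · intro h
    ext i
    by_cases hi : i ∈ δ.support
    · have := Finset.sum_eq_zero_iff.mp h i hi
      simpa using this
    · simpa using Finsupp.notMem_support_iff.mp hi
  · rintro rfl; simp [wt]

lemma coord_le_wt (δ : Fin n →₀ ℕ) (i : Fin n) : δ i ≤ wt δ := by
  by_cases hi : i ∈ δ.support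
  · exact Finset.single_le_sum (fun _ _ => Nat.zero_le _) hi
  · simp [Finsupp.notMem_support_iff.mp hi]

/-- the ideal of power series all of whose terms have total degree ≥ M -/
noncomputable def lowIdeal (n : ℕ) (k : Type) [Field k] (M : ℕ) : Ideal (MvPowerSeries (Fin n) k) where
  carrier := {g | ∀ δ, wt δ < M → MvPowerSeries.coeff δ g = 0}
  add_mem' := fun hf hg δ h => by rw [map_add, hf δ h, hg δ h, add_zero]
  zero_mem' := fun δ _ => map_zero _
  smul_mem' := fun r g hg δ h => by
    rw [smul_eq_mul, MvPowerSeries.coeff_mul]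
    refine Finset.sum_eq_zero fun p hp => ?_
    rw [Finset.HasAntidiagonal.mem_antidiagonal] at hp
    have : wt p.2 < M :=
      lt_of_le_of_lt (by rw [← hp, wt_add]; exact Nat.le_add_left _ _) h
    rw [hg p.2 this, mul_zero]

lemma mem_lowIdeal_iff {M : ℕ} {g : MvPowerSeries (Fin n) k} :
    g ∈ lowIdeal n k M ↔ ∀ δ, wt δ < M → MvPowerSeries.coeff δ g = 0 := Iff.rfl

/-- the ideal generated by the variables -/
noncomputable def mIdeal (n : ℕ) (k : Type) [Field k] : Ideal (MvPowerSeries (Fin n) k) :=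
  Ideal.span (Set.range MvPowerSeries.X)

lemma mIdeal_le_lowIdeal_one : mIdeal n k ≤ lowIdeal n k 1 := by
  rw [mIdeal, Ideal.span_le]
  rintro - ⟨i, rfl⟩
  intro δ hδ
  have hδ0 : δ = 0 := wt_eq_zero.mp (Nat.lt_one_iff.mp hδ)
  subst hδ0
  rw [MvPowerSeries.coeff_zero_eq_constantCoeff]
  exact MvPowerSeries.constantCoeff_X i

lemma coeffXmul (i : Fin n) (h : MvPowerSeries (Fin n) k) (δ : Fin n →₀ ℕ) :
    MvPowerSeries.coeff δ (MvPowerSeries.X i * h) =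
      if Finsupp.single i 1 ≤ δ then
        MvPowerSeries.coeff (δ - Finsupp.single i 1) h else 0 := by
  rw [show (MvPowerSeries.X i : MvPowerSeries (Fin n) k)
      = MvPowerSeries.monomial (Finsupp.single i 1) 1 from rfl,
    MvPowerSeries.coeff_monomial_mul]
  split <;> simp

lemma lowIdeal_succ_decomp {M : ℕ} {g : MvPowerSeries (Fin n) k}
    (hg : g ∈ lowIdeal n k (M + 1)) :
    ∃ gp : Fin n → MvPowerSeries (Fin n) k, (∀ i, gp i ∈ lowIdeal n k M) ∧
      g = ∑ i, MvPowerSeries.X i * gp i := by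
  classical
  set gp : Fin n → MvPowerSeries (Fin n) k := fun i δ =>
    if ∀ j, j < i → δ j = 0 then
      MvPowerSeries.coeff (δ + Finsupp.single i 1) g else 0 with hgp
  have coeff_gp : ∀ i δ, MvPowerSeries.coeff δ (gp i) =
      if ∀ j, j < i → δ j = 0 then
        MvPowerSeries.coeff (δ + Finsupp.single i 1) g else 0 := fun i δ => rfl
  refine ⟨gp, ?_, ?_⟩
  · intro i δ hδ
    rw [coeff_gp]
    split
    · refine hg _ ?_
      rw [wt_add, wt_single]
      omega
    · rfl
  · ext δ
    rw [map_sum]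
    simp only [coeffXmul, coeff_gp]
    by_cases hδ0 : δ = 0
    · subst hδ0
      rw [Finset.sum_eq_zero, hg 0 (by simp [wt])]
      intro i _
      rw [if_neg]
      intro hle
      have := Finsupp.single_le_iff.mp hle
      simp at this
    · have hsupp : δ.support.Nonempty := by
        rwa [Finsupp.support_nonempty_iff]
      set i₀ := δ.support.min' hsupp with hi₀
      have hi₀mem : i₀ ∈ δ.support := δ.support.min'_mem hsupp
      have hδi₀ : δ i₀ ≠ 0 := Finsupp.mem_support_iff.mp hi₀mem
      have hmin : ∀ j, j < i₀ → δ j = 0 := by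
        intro j hj
        by_contra hne
        exact absurd (δ.support.min'_le j (Finsupp.mem_support_iff.mpr hne))
          (not_le.mpr hj)
      rw [Finset.sum_eq_single i₀]
      · have hle : Finsupp.single i₀ 1 ≤ δ :=
          Finsupp.single_le_iff.mpr (Nat.one_le_iff_ne_zero.mpr hδi₀)
        rw [if_pos hle, if_pos, tsub_add_cancel_of_le hle]
        intro j hj
        rw [Finsupp.tsub_apply, hmin j hj]
        simp
      · intro i _ hne
        by_cases hle : Finsupp.single i 1 ≤ δ
        · rw [if_pos hle, if_neg]
          intro hall
          rcases lt_or_gt_of_ne hne with hlt | hgt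
          · -- i < i₀ : then δ i = 0, contradicting single i 1 ≤ δ
            have := Finsupp.single_le_iff.mp hle
            rw [hmin i hlt] at this
            omega
          · -- i₀ < i : then (δ - e_i) i₀ = δ i₀ ≠ 0 contradicts hall
            have h1 := hall i₀ hgt
            rw [Finsupp.tsub_apply, Finsupp.single_apply,
              if_neg (fun h => (ne_of_gt hgt) h)] at h1
            omega
        · rw [if_neg hle]
      · intro h
        exact absurd (Finset.mem_univ i₀) h

lemma lowIdeal_le_pow : ∀ M, lowIdeal n k M ≤ (mIdeal n k) ^ M := by
  intro M
  induction M with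
  | zero => rw [pow_zero, Ideal.one_eq_top]; exact le_top
  | succ M ih =>
    intro g hg
    obtain ⟨gp, hgp, rfl⟩ := lowIdeal_succ_decomp hg
    refine Submodule.sum_mem _ fun i _ => ?_
    rw [pow_succ, mul_comm (MvPowerSeries.X i)]
    exact Ideal.mul_mem_mul (ih (hgp i)) (Ideal.subset_span ⟨i, rfl⟩)

lemma lowIdeal_anti {M M' : ℕ} (h : M ≤ M') : lowIdeal n k M' ≤ lowIdeal n k M :=
  fun _ hg δ hδ => hg δ (lt_of_lt_of_le hδ h)

noncomputable def pairF (F : MvPolynomial (Fin n) k) :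
    MvPowerSeries (Fin n) k →ₗ[k] k :=
  ∑ γ ∈ F.support, MvPolynomial.coeff γ F • (MvPowerSeries.coeff γ)

lemma pairF_apply (F : MvPolynomial (Fin n) k) (g : MvPowerSeries (Fin n) k) :
    pairF F g = ∑ γ ∈ F.support,
      MvPolynomial.coeff γ F * MvPowerSeries.coeff γ g := by
  simp [pairF]

lemma coeff_contract_eq_pairF (g : MvPowerSeries (Fin n) k) (F : MvPolynomial (Fin n) k)
    (β : Fin n →₀ ℕ) :
    MvPolynomial.coeff β (contract g F) =
      pairF F (MvPowerSeries.monomial β 1 * g) := by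
  rw [coeff_contract g F (le_refl F.support) β, pairF_apply]
  refine Finset.sum_congr rfl fun γ _ => ?_
  rw [MvPowerSeries.coeff_monomial_mul]
  split
  · rw [one_mul, mul_comm]
  · rw [mul_zero]

lemma pairF_eq_coeff_contract_zero (g : MvPowerSeries (Fin n) k)
    (F : MvPolynomial (Fin n) k) :
    pairF F g = MvPolynomial.coeff 0 (contract g F) := by
  rw [coeff_contract_eq_pairF, MvPowerSeries.monomial_zero_one, one_mul]

lemma mem_perp_iff_pairF {I : Ideal (MvPowerSeries (Fin n) k)}
    {F : MvPolynomial (Fin n) k} :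
    F ∈ perp I ↔ ∀ g ∈ I, pairF F g = 0 := by
  constructor
  · intro hF g hg
    rw [pairF_eq_coeff_contract_zero, hF g hg, MvPolynomial.coeff_zero]
  · intro h g hg
    apply MvPolynomial.ext
    intro β
    rw [coeff_contract_eq_pairF, MvPolynomial.coeff_zero]
    exact h _ (Ideal.mul_mem_left I _ hg)

lemma pairF_lowIdeal (F : MvPolynomial (Fin n) k) {g : MvPowerSeries (Fin n) k}
    (hg : g ∈ lowIdeal n k (F.totalDegree + 1)) : pairF F g = 0 := by
  rw [pairF_apply]
  refine Finset.sum_eq_zero fun γ hγ => ?_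
  rw [hg γ (Nat.lt_succ_of_le (MvPolynomial.le_totalDegree hγ)), mul_zero]

lemma mem_lowIdeal_one_iff {g : MvPowerSeries (Fin n) k} :
    g ∈ lowIdeal n k 1 ↔ MvPowerSeries.constantCoeff g = 0 := by
  constructor
  · intro hg
    rw [← MvPowerSeries.coeff_zero_eq_constantCoeff_apply]
    exact hg 0 (by simp [wt])
  · intro hg δ hδ
    rw [wt_eq_zero.mp (Nat.lt_one_iff.mp hδ)]
    rw [MvPowerSeries.coeff_zero_eq_constantCoeff_apply]
    exact hg

lemma proper_le_lowIdeal_one {I : Ideal (MvPowerSeries (Fin n) k)} (hI : I ≠ ⊤) :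
    I ≤ lowIdeal n k 1 := by
  intro g hg
  rw [mem_lowIdeal_one_iff]
  by_contra hc
  exact hI (Ideal.eq_top_of_isUnit_mem I hg
    (MvPowerSeries.isUnit_iff_constantCoeff.mpr (isUnit_iff_ne_zero.mpr hc)))

lemma lowIdeal_one_eq_mIdeal : lowIdeal n k 1 = mIdeal n k :=
  le_antisymm (by simpa using lowIdeal_le_pow (n := n) (k := k) 1) mIdeal_le_lowIdeal_one

set_option maxHeartbeats 1000000 in
set_option synthInstance.maxHeartbeats 200000 in
lemma closed_of_dim_one {I : Ideal (MvPowerSeries (Fin n) k)}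
    (hdim : ringKrullDim (MvPowerSeries (Fin n) k ⧸ I) = 1) (hI : I.IsPrime)
    {z : MvPowerSeries (Fin n) k} (hz : ∀ M, z ∈ I ⊔ lowIdeal n k M) : z ∈ I := by
  by_contra hzI
  set π := Ideal.Quotient.mk I with hπ
  have hle1 : I ≤ lowIdeal n k 1 := proper_le_lowIdeal_one hI.ne_top
  set ϑ : (MvPowerSeries (Fin n) k ⧸ I) →+* k :=
    Ideal.Quotient.lift I (MvPowerSeries.constantCoeff)
      (fun a ha => mem_lowIdeal_one_iff.mp (hle1 ha)) with hϑ
  set 𝔐 : Ideal (MvPowerSeries (Fin n) k ⧸ I) := Ideal.map π (lowIdeal n k 1) with h𝔐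
  have hker : 𝔐 = RingHom.ker ϑ := by
    apply le_antisymm
    · rw [Ideal.map_le_iff_le_comap]
      intro g hg
      show ϑ (π g) = 0
      rw [hϑ, hπ, Ideal.Quotient.lift_mk]
      exact mem_lowIdeal_one_iff.mp hg
    · intro y hy
      obtain ⟨g, rfl⟩ := Ideal.Quotient.mk_surjective y
      have hcc : MvPowerSeries.constantCoeff g = 0 := hy
      exact Ideal.mem_map_of_mem π (mem_lowIdeal_one_iff.mpr hcc)
  have h𝔐prime : 𝔐.IsPrime := hker ▸ RingHom.ker_isPrime ϑ
  have hallprime : ∀ Q : Ideal (MvPowerSeries (Fin n) k ⧸ I), Q ≠ ⊤ → Q ≤ 𝔐 := by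
    intro Q hQ
    rw [← Ideal.map_comap_of_surjective π Ideal.Quotient.mk_surjective Q]
    exact Ideal.map_mono (proper_le_lowIdeal_one (Ideal.comap_ne_top π hQ))
  have hzb : π z ≠ 0 := fun h => hzI (Ideal.Quotient.eq_zero_iff_mem.mp h)
  have hz𝔐pow : ∀ M, π z ∈ 𝔐 ^ M := by
    intro M
    obtain ⟨i, hi, h, hh, hsum⟩ := Submodule.mem_sup.mp (hz M)
    have hπz : π z = π h := by
      rw [← hsum, map_add, Ideal.Quotient.eq_zero_iff_mem.mpr hi, zero_add]
    rw [hπz]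
    have hMle : Ideal.map π (lowIdeal n k M) ≤ 𝔐 ^ M := by
      calc Ideal.map π (lowIdeal n k M)
          ≤ Ideal.map π ((mIdeal n k) ^ M) := Ideal.map_mono (lowIdeal_le_pow M)
        _ = (Ideal.map π (mIdeal n k)) ^ M := Ideal.map_pow π _ M
        _ = 𝔐 ^ M := by rw [h𝔐, lowIdeal_one_eq_mIdeal]
    exact hMle (Ideal.mem_map_of_mem π hh)
  have hz𝔐 : π z ∈ 𝔐 := by simpa using hz𝔐pow 1
  have hrad : 𝔐 ≤ (Ideal.span {π z}).radical := by
    rw [Ideal.radical_eq_sInf]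
    refine le_sInf fun J hJ => ?_
    obtain ⟨hJz, hJprime⟩ := hJ
    have hJ𝔐 : J ≤ 𝔐 := hallprime J hJprime.ne_top
    by_contra hJne
    have hJbot : J ≠ ⊥ := by
      intro hb
      exact hzb (by simpa [hb] using hJz (Ideal.mem_span_singleton_self (π z)))
    have hJlt : J < 𝔐 := lt_of_le_of_ne hJ𝔐 (fun h => hJne (le_of_eq h.symm))
    have hbotJ : (⊥ : Ideal (MvPowerSeries (Fin n) k ⧸ I)) < J := Ne.bot_lt hJbot
    let P0 : PrimeSpectrum (MvPowerSeries (Fin n) k ⧸ I) := ⟨⊥, Ideal.bot_prime⟩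
    let P1 : PrimeSpectrum (MvPowerSeries (Fin n) k ⧸ I) := ⟨J, hJprime⟩
    let P2 : PrimeSpectrum (MvPowerSeries (Fin n) k ⧸ I) := ⟨𝔐, h𝔐prime⟩
    have hchain : List.IsChain (· < ·) [P0, P1, P2] := by
      refine List.isChain_cons_cons.mpr ⟨?_, List.isChain_cons_cons.mpr ⟨?_, List.isChain_singleton _⟩⟩
      · exact (PrimeSpectrum.asIdeal_lt_asIdeal P0 P1).mp hbotJ
      · exact (PrimeSpectrum.asIdeal_lt_asIdeal P1 P2).mp hJlt
    let p : LTSeries (PrimeSpectrum (MvPowerSeries (Fin n) k ⧸ I)) :=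
      RelSeries.fromListIsChain [P0, P1, P2] (by simp) hchain
    have hlen := Order.LTSeries.length_le_krullDim (α := PrimeSpectrum (MvPowerSeries (Fin n) k ⧸ I)) p
    rw [show p.length = 2 from rfl] at hlen
    rw [show Order.krullDim (PrimeSpectrum (MvPowerSeries (Fin n) k ⧸ I))
        = ringKrullDim (MvPowerSeries (Fin n) k ⧸ I) from rfl, hdim] at hlen
    norm_num at hlen
  have hFG : 𝔐.FG := by
    rw [h𝔐, lowIdeal_one_eq_mIdeal, mIdeal, Ideal.map_span]
    exact Submodule.fg_span ((Set.finite_range _).image _)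
  obtain ⟨m, hm⟩ := Ideal.exists_pow_le_of_le_radical_of_fg hrad hFG
  have h2m : π z ∈ Ideal.span {π z * π z} := by
    have hmem := hz𝔐pow (m + m)
    rw [pow_add] at hmem
    have hle : 𝔐 ^ m * 𝔐 ^ m ≤ Ideal.span {π z * π z} := by
      calc 𝔐 ^ m * 𝔐 ^ m ≤ Ideal.span {π z} * Ideal.span {π z} := Ideal.mul_mono hm hm
        _ = Ideal.span {π z * π z} := Ideal.span_singleton_mul_span_singleton _ _
    exact hle hmem
  obtain ⟨w, hw⟩ := Ideal.mem_span_singleton'.mp h2m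
  have hfactor : π z * (w * π z - 1) = 0 := by ring_nf; linear_combination hw
  rcases mul_eq_zero.mp hfactor with h | h
  · exact hzb h
  · have h1 : w * π z = 1 := sub_eq_zero.mp h
    have hone : (1 : MvPowerSeries (Fin n) k ⧸ I) ∈ 𝔐 :=
      h1 ▸ Ideal.mul_mem_left 𝔐 w hz𝔐
    exact h𝔐prime.ne_top ((Ideal.eq_top_iff_one 𝔐).mpr hone)

noncomputable def degFinset (n M : ℕ) : Finset (Fin n →₀ ℕ) :=
  (Finset.Iic (Finsupp.equivFunOnFinite.symm (fun _ => M))).filter (fun γ => wt γ < M)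

lemma mem_degFinset {M : ℕ} {γ : Fin n →₀ ℕ} : γ ∈ degFinset n M ↔ wt γ < M := by
  rw [degFinset, Finset.mem_filter, Finset.mem_Iic]
  refine ⟨fun h => h.2, fun h => ⟨?_, h⟩⟩
  rw [Finsupp.le_iff]
  intro i _
  simp only [Finsupp.coe_equivFunOnFinite_symm]
  exact le_of_lt (lt_of_le_of_lt (coord_le_wt γ i) h)

lemma finiteDimensional_lowQuot (L : ℕ) :
    FiniteDimensional k (MvPowerSeries (Fin n) k ⧸
      Submodule.restrictScalars k (lowIdeal n k L)) := by
  classical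
  set Θ : MvPowerSeries (Fin n) k →ₗ[k] ({γ // γ ∈ degFinset n L} → k) :=
    LinearMap.pi (fun γ : {γ // γ ∈ degFinset n L} => MvPowerSeries.coeff γ.1) with hΘ
  have hker : LinearMap.ker Θ = Submodule.restrictScalars k (lowIdeal n k L) := by
    ext g
    simp only [LinearMap.mem_ker, hΘ, Submodule.restrictScalars_mem]
    constructor
    · intro h δ hδ
      have := congrFun h ⟨δ, mem_degFinset.mpr hδ⟩
      simpa using this
    · intro h
      funext γ
      exact h γ.1 (mem_degFinset.mp γ.2)
  have e : (MvPowerSeries (Fin n) k ⧸ Submodule.restrictScalars k (lowIdeal n k L)) ≃ₗ[k]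
      LinearMap.range Θ :=
    (Submodule.quotEquivOfEq _ _ hker.symm).trans (LinearMap.quotKerEquivRange Θ)
  exact Module.Finite.equiv e.symm

lemma stab_level (I : Ideal (MvPowerSeries (Fin n) k)) (a : MvPowerSeries (Fin n) k)
    (L : ℕ) : ∃ μ, ∀ M, μ ≤ M →
      Submodule.map (Submodule.mkQ (Submodule.restrictScalars k (lowIdeal n k L)))
        (Submodule.comap (LinearMap.mulLeft k a)
          (Submodule.restrictScalars k (I ⊔ lowIdeal n k M))) =
      Submodule.map (Submodule.mkQ (Submodule.restrictScalars k (lowIdeal n k L)))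
        (Submodule.comap (LinearMap.mulLeft k a)
          (Submodule.restrictScalars k (I ⊔ lowIdeal n k μ))) := by
  haveI := finiteDimensional_lowQuot (n := n) (k := k) L
  haveI : IsArtinian k (MvPowerSeries (Fin n) k ⧸
      Submodule.restrictScalars k (lowIdeal n k L)) := isArtinian_of_fg_of_artinian'
  set q := Submodule.mkQ (Submodule.restrictScalars k (lowIdeal n k L))
  have hanti : ∀ {M M' : ℕ}, M ≤ M' →
      Submodule.map q (Submodule.comap (LinearMap.mulLeft k a)
        (Submodule.restrictScalars k (I ⊔ lowIdeal n k M'))) ≤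
      Submodule.map q (Submodule.comap (LinearMap.mulLeft k a)
        (Submodule.restrictScalars k (I ⊔ lowIdeal n k M))) := by
    intro M M' h
    refine Submodule.map_mono (Submodule.comap_mono ?_)
    exact fun x hx => (sup_le_sup_left (lowIdeal_anti h) I) hx
  obtain ⟨μ, hμ⟩ := IsArtinian.monotone_stabilizes
    (⟨fun M => OrderDual.toDual (Submodule.map q (Submodule.comap (LinearMap.mulLeft k a)
        (Submodule.restrictScalars k (I ⊔ lowIdeal n k M)))),
      fun M M' h => hanti h⟩ : ℕ →o (Submodule k _)ᵒᵈ)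
  exact ⟨μ, fun M hM => congrArg OrderDual.ofDual (hμ M hM).symm⟩

set_option maxHeartbeats 1000000 in
lemma colon_bound {I : Ideal (MvPowerSeries (Fin n) k)}
    (hdim : ringKrullDim (MvPowerSeries (Fin n) k ⧸ I) = 1) (hI : I.IsPrime)
    {a : MvPowerSeries (Fin n) k} (ha : a ∉ I) (N : ℕ) :
    ∃ M, N ≤ M ∧ ∀ x, a * x ∈ I ⊔ lowIdeal n k M → x ∈ I ⊔ lowIdeal n k N := by
  classical
  set C : ℕ → Submodule k (MvPowerSeries (Fin n) k) := fun M =>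
    Submodule.comap (LinearMap.mulLeft k a)
      (Submodule.restrictScalars k (I ⊔ lowIdeal n k M)) with hC
  have memC : ∀ {M : ℕ} {x : MvPowerSeries (Fin n) k},
      x ∈ C M ↔ a * x ∈ I ⊔ lowIdeal n k M := by
    intro M x
    rw [hC]
    exact Iff.rfl
  choose μf hμf using fun L => stab_level (n := n) (k := k) I a L
  let Mf : ℕ → ℕ := fun j =>
    Nat.rec (max (μf N) N) (fun j prev => max (μf (N + (j+1))) (prev + 1)) j
  have hMfs : ∀ j, Mf (j+1) = max (μf (N + (j+1))) (Mf j + 1) := fun _ => rfl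
  have hMfμ : ∀ j, μf (N + j) ≤ Mf j := by
    intro j
    cases j with
    | zero =>
      show μf (N + 0) ≤ max (μf N) N
      rw [Nat.add_zero]
      exact le_max_left _ _
    | succ j => rw [hMfs j]; exact le_max_left _ _
  have hMfN : ∀ j, N + j ≤ Mf j := by
    intro j
    induction j with
    | zero =>
      show N + 0 ≤ max (μf N) N
      rw [Nat.add_zero]
      exact le_max_right _ _
    | succ j ih =>
      rw [hMfs j]
      refine le_trans ?_ (le_max_right _ _)
      omega
  have hMfmono : ∀ j, Mf j + 1 ≤ Mf (j + 1) := by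
    intro j; rw [hMfs j]; exact le_max_right _ _
  have key : ∀ j (y : MvPowerSeries (Fin n) k), y ∈ C (Mf j) →
      ∃ y', y' ∈ C (Mf (j+1)) ∧ y - y' ∈ lowIdeal n k (N + j) := by
    intro j y hy
    set q := Submodule.mkQ (Submodule.restrictScalars k (lowIdeal n k (N + j))) with hq
    have h1 : q y ∈ Submodule.map q (C (Mf j)) := Submodule.mem_map_of_mem hy
    have h2 : Submodule.map q (C (Mf j)) = Submodule.map q (C (Mf (j+1))) := by
      rw [hC, hq]
      rw [hμf (N+j) (Mf j) (hMfμ j),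
        hμf (N+j) (Mf (j+1)) (le_trans (hMfμ j) (le_trans (Nat.le_succ _) (hMfmono j)))]
    rw [h2] at h1
    obtain ⟨y', hy', hqy⟩ := h1
    refine ⟨y', hy', ?_⟩
    have h3 : y - y' ∈ LinearMap.ker q := by
      rw [LinearMap.mem_ker, map_sub, hqy, sub_self]
    rw [hq, Submodule.ker_mkQ] at h3
    exact h3
  refine ⟨Mf 0, by have := hMfN 0; omega, ?_⟩
  intro x hx
  have hx0 : x ∈ C (Mf 0) := memC.mpr hx
  let xs : ∀ j, {y : MvPowerSeries (Fin n) k // y ∈ C (Mf j)} := fun j =>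
    Nat.rec ⟨x, hx0⟩ (fun j p => ⟨Classical.choose (key j p.1 p.2),
      (Classical.choose_spec (key j p.1 p.2)).1⟩) j
  have hxs : ∀ j, (xs j).1 - (xs (j+1)).1 ∈ lowIdeal n k (N + j) := fun j =>
    (Classical.choose_spec (key j (xs j).1 (xs j).2)).2
  have hdiff : ∀ i j, i ≤ j → (xs i).1 - (xs j).1 ∈ lowIdeal n k (N + i) := by
    intro i j
    induction j with
    | zero =>
      intro hij
      obtain rfl : i = 0 := Nat.le_zero.mp hij
      rw [sub_self]
      exact Submodule.zero_mem _
    | succ j ih =>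
      intro hij
      rcases Nat.lt_or_ge i (j+1) with h | h
      · have h1 := ih (Nat.le_of_lt_succ h)
        have h2 := hxs j
        have heq : (xs i).1 - (xs (j+1)).1 =
            ((xs i).1 - (xs j).1) + ((xs j).1 - (xs (j+1)).1) := by ring
        rw [heq]
        exact Submodule.add_mem _ h1 (lowIdeal_anti (by omega) h2)
      · obtain rfl : i = j + 1 := le_antisymm hij h
        rw [sub_self]
        exact Submodule.zero_mem _
  set y : MvPowerSeries (Fin n) k := fun δ => MvPowerSeries.coeff δ (xs (wt δ + 1)).1
    with hy
  have hcy : ∀ δ, MvPowerSeries.coeff δ y =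
      MvPowerSeries.coeff δ (xs (wt δ + 1)).1 := fun δ => rfl
  have hylim : ∀ j, y - (xs j).1 ∈ lowIdeal n k (N + j) := by
    intro j δ hδ
    rw [map_sub, hcy]
    rcases le_or_gt (wt δ + 1) j with h | h
    · have h0 : MvPowerSeries.coeff δ ((xs (wt δ + 1)).1 - (xs j).1) = 0 :=
        hdiff (wt δ + 1) j h δ (by omega)
      rw [map_sub] at h0
      exact h0
    · have h0 : MvPowerSeries.coeff δ ((xs j).1 - (xs (wt δ + 1)).1) = 0 :=
        hdiff j (wt δ + 1) (by omega) δ hδ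
      rw [map_sub] at h0
      rw [sub_eq_zero] at h0 ⊢
      exact h0.symm
  have haysup : ∀ L, a * y ∈ I ⊔ lowIdeal n k L := by
    intro L
    have hsplit : a * y = a * (xs L).1 + a * (y - (xs L).1) := by ring
    rw [hsplit]
    refine Submodule.add_mem _ ?_ ?_
    · have h1 : a * (xs L).1 ∈ I ⊔ lowIdeal n k (Mf L) := memC.mp (xs L).2
      exact (sup_le_sup_left (lowIdeal_anti (le_trans (by omega : L ≤ N + L) (hMfN L))) I) h1
    · have h2 : a * (y - (xs L).1) ∈ lowIdeal n k (N + L) :=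
        Ideal.mul_mem_left _ a (hylim L)
      exact Submodule.mem_sup_right (lowIdeal_anti (by omega) h2)
  have hyI : y ∈ I := (hI.mem_or_mem (closed_of_dim_one hdim hI haysup)).resolve_left ha
  have hxy : x - y ∈ lowIdeal n k N := by
    have h := hylim 0
    have hx0eq : (xs 0).1 = x := rfl
    rw [hx0eq] at h
    have : x - y = -(y - x) := by ring
    rw [this]
    exact Submodule.neg_mem _ (by simpa using h)
  have : x = y + (x - y) := by ring
  rw [this]
  exact Submodule.add_mem _ (Submodule.mem_sup_left hyI) (Submodule.mem_sup_right hxy)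


lemma pairF_eq_sum_subset (F : MvPolynomial (Fin n) k) (g : MvPowerSeries (Fin n) k)
    {S : Finset (Fin n →₀ ℕ)} (hS : F.support ⊆ S) :
    pairF F g = ∑ γ ∈ S, MvPolynomial.coeff γ F * MvPowerSeries.coeff γ g := by
  rw [pairF_apply]
  refine Finset.sum_subset hS fun γ _ hγ => ?_
  rw [MvPolynomial.notMem_support_iff.mp hγ, zero_mul]

set_option maxHeartbeats 1000000 in
lemma perp_divisible {I : Ideal (MvPowerSeries (Fin n) k)}
    (hdim : ringKrullDim (MvPowerSeries (Fin n) k ⧸ I) = 1) (hI : I.IsPrime)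
    {a : MvPowerSeries (Fin n) k} (ha : a ∉ I)
    {F : MvPolynomial (Fin n) k} (hF : F ∈ perp I) :
    ∃ G ∈ perp I, contract a G = F := by
  classical
  obtain ⟨M, hNM, hcolon⟩ := colon_bound hdim hI ha (F.totalDegree + 1)
  set U : Submodule k (MvPowerSeries (Fin n) k) :=
    Submodule.restrictScalars k (I ⊔ lowIdeal n k M) with hU
  set α : MvPowerSeries (Fin n) k →ₗ[k] (MvPowerSeries (Fin n) k ⧸ U) :=
    (Submodule.mkQ U).comp (LinearMap.mulLeft k a) with hα
  have hker_le : LinearMap.ker α ≤ LinearMap.ker (pairF F) := by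
    intro x hx
    rw [LinearMap.mem_ker] at hx ⊢
    have hmem : a * x ∈ I ⊔ lowIdeal n k M := by
      have h0 : Submodule.mkQ U (a * x) = 0 := hx
      have h1 : a * x ∈ U := by
        have := (Submodule.Quotient.mk_eq_zero U).mp h0
        exact this
      exact h1
    obtain ⟨i, hi, h, hh, rfl⟩ := Submodule.mem_sup.mp (hcolon x hmem)
    rw [map_add, mem_perp_iff_pairF.mp hF i hi, pairF_lowIdeal F hh, add_zero]
  set f0 : (MvPowerSeries (Fin n) k ⧸ LinearMap.ker α) →ₗ[k] k :=
    Submodule.liftQ (LinearMap.ker α) (pairF F) hker_le with hf0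
  set f1 : (LinearMap.range α) →ₗ[k] k :=
    f0.comp (α.quotKerEquivRange.symm : _ ≃ₗ[k] _).toLinearMap with hf1
  obtain ⟨ψ, hψ⟩ := LinearMap.exists_extend f1
  set χ : MvPowerSeries (Fin n) k →ₗ[k] k := ψ.comp (Submodule.mkQ U) with hχ
  have hχa : ∀ x, χ (a * x) = pairF F x := by
    intro x
    have e0 : χ (a * x) = ψ (α x) := rfl
    have e1 : ψ (α x) = f1 ⟨α x, LinearMap.mem_range_self α x⟩ := by
      rw [← hψ]; rfl
    have e2 : α.quotKerEquivRange (Submodule.Quotient.mk x) =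
        ⟨α x, LinearMap.mem_range_self α x⟩ :=
      Subtype.ext (α.quotKerEquivRange_apply_mk x)
    have e3 : (α.quotKerEquivRange.symm ⟨α x, LinearMap.mem_range_self α x⟩ :
        MvPowerSeries (Fin n) k ⧸ LinearMap.ker α) = Submodule.Quotient.mk x :=
      (LinearEquiv.symm_apply_eq _).mpr e2.symm
    rw [e0, e1, hf1]
    simp only [LinearMap.comp_apply, LinearEquiv.coe_coe]
    rw [e3, hf0, Submodule.liftQ_apply]
  have hχU : ∀ x ∈ U, χ x = 0 := by
    intro x hx
    have h0 : U.mkQ x = 0 := by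
      rw [Submodule.mkQ_apply, Submodule.Quotient.mk_eq_zero]
      exact hx
    rw [hχ, LinearMap.comp_apply, h0, map_zero]
  set G : MvPolynomial (Fin n) k := ∑ γ ∈ degFinset n M,
    MvPolynomial.monomial γ (χ (MvPowerSeries.monomial γ 1)) with hG
  have hGsupp : G.support ⊆ degFinset n M := by
    intro δ hδ
    rw [MvPolynomial.mem_support_iff] at hδ
    by_contra hmem
    apply hδ
    rw [hG, MvPolynomial.coeff_sum]
    refine Finset.sum_eq_zero fun γ hγ => ?_
    rw [MvPolynomial.coeff_monomial, if_neg (fun (h : γ = δ) => hmem (h ▸ hγ))]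
  have hGcoeff : ∀ γ ∈ degFinset n M,
      MvPolynomial.coeff γ G = χ (MvPowerSeries.monomial γ 1) := by
    intro γ hγ
    rw [hG, MvPolynomial.coeff_sum]
    rw [Finset.sum_eq_single γ]
    · rw [MvPolynomial.coeff_monomial, if_pos rfl]
    · intro γ' _ hne
      rw [MvPolynomial.coeff_monomial, if_neg hne]
    · intro hmem
      exact absurd hγ hmem
  have hpairG : ∀ g, pairF G g = χ g := by
    intro g
    set t : MvPowerSeries (Fin n) k := ∑ γ ∈ degFinset n M,
      MvPowerSeries.coeff γ g • MvPowerSeries.monomial γ 1 with ht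
    have hcoefft : ∀ δ, MvPowerSeries.coeff δ t =
        if δ ∈ degFinset n M then MvPowerSeries.coeff δ g else 0 := by
      intro δ
      rw [ht, map_sum]
      by_cases hδ : δ ∈ degFinset n M
      · rw [if_pos hδ, Finset.sum_eq_single δ]
        · rw [LinearMap.map_smul, MvPowerSeries.coeff_monomial_same, smul_eq_mul, mul_one]
        · intro γ _ hne
          rw [LinearMap.map_smul, MvPowerSeries.coeff_monomial, if_neg (fun h => hne h.symm),
            smul_eq_mul, mul_zero]
        · intro hmem
          exact absurd hδ hmem
      · rw [if_neg hδ]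
        refine Finset.sum_eq_zero fun γ hγ => ?_
        rw [LinearMap.map_smul, MvPowerSeries.coeff_monomial,
          if_neg (fun (h : δ = γ) => hδ (h ▸ hγ)), smul_eq_mul, mul_zero]
    have hgt : g - t ∈ lowIdeal n k M := by
      intro δ hδ
      rw [map_sub, hcoefft, if_pos (mem_degFinset.mpr hδ), sub_self]
    have hχt : χ g = χ t := by
      have h0 : χ (g - t) = 0 := hχU _ (Submodule.mem_sup_right hgt)
      rw [map_sub, sub_eq_zero] at h0
      exact h0
    rw [hχt, ht, map_sum, pairF_eq_sum_subset G g hGsupp]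
    refine Finset.sum_congr rfl fun γ hγ => ?_
    rw [LinearMap.map_smul, hGcoeff γ hγ, smul_eq_mul, mul_comm]
  refine ⟨G, ?_, ?_⟩
  · refine mem_perp_iff_pairF.mpr fun g hg => ?_
    rw [hpairG, hχU]
    exact Submodule.mem_sup_left hg
  · apply MvPolynomial.ext
    intro β
    rw [coeff_contract_eq_pairF, hpairG, mul_comm, hχa]
    have := coeff_contract_eq_pairF (1 : MvPowerSeries (Fin n) k) F β
    rw [one_contract, mul_one] at this
    exact this.symm

lemma exists_X_not_mem {I : Ideal (MvPowerSeries (Fin n) k)}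
    (hdim : ringKrullDim (MvPowerSeries (Fin n) k ⧸ I) = 1) (hI : I.IsPrime) :
    ∃ i, MvPowerSeries.X i ∉ I := by
  by_contra hc
  push_neg at hc
  have h1 : lowIdeal n k 1 ≤ I := by
    rw [lowIdeal_one_eq_mIdeal, mIdeal, Ideal.span_le]
    rintro - ⟨i, rfl⟩
    exact hc i
  have h2 : I = lowIdeal n k 1 := le_antisymm (proper_le_lowIdeal_one hI.ne_top) h1
  set ϑ : (MvPowerSeries (Fin n) k ⧸ I) →+* k :=
    Ideal.Quotient.lift I (MvPowerSeries.constantCoeff)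
      (fun a ha => mem_lowIdeal_one_iff.mp (h2 ▸ ha)) with hϑ
  have hbij : Function.Bijective ϑ := by
    constructor
    · rw [injective_iff_map_eq_zero]
      intro x hx
      obtain ⟨g, rfl⟩ := Ideal.Quotient.mk_surjective x
      rw [hϑ, Ideal.Quotient.lift_mk] at hx
      rw [Ideal.Quotient.eq_zero_iff_mem, h2]
      exact mem_lowIdeal_one_iff.mpr hx
    · intro c
      refine ⟨Ideal.Quotient.mk I (MvPowerSeries.C c), ?_⟩
      rw [hϑ, Ideal.Quotient.lift_mk]
      exact MvPowerSeries.constantCoeff_C c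
  have hiso := ringKrullDim_eq_of_ringEquiv (RingEquiv.ofBijective ϑ hbij)
  rw [hdim, ringKrullDim_eq_zero_of_field k] at hiso
  norm_num at hiso


set_option linter.unusedVariables false in
/-- STATEMENT 17: if `I` is prime with `dim R/I = 1`, then `a ∘ I^⊥ = I^⊥` for
every `a ∈ R \ I`; in particular `𝔪 ∘ I^⊥ = I^⊥` for the maximal ideal
`𝔪 = (x_1,…,x_n)`, and yet `I^⊥ ≠ 0`. -/
theorem perp_divisible_of_prime {n : ℕ} {k : Type} [Field k] (hn : 1 ≤ n)
    (I : Ideal (MvPowerSeries (Fin n) k))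
    (hdim : ringKrullDim (MvPowerSeries (Fin n) k ⧸ I) = 1) (hI : I.IsPrime) :
    (∀ a : MvPowerSeries (Fin n) k, a ∉ I →
      contract a '' (perp I : Set (MvPolynomial (Fin n) k)) =
        (perp I : Set (MvPolynomial (Fin n) k))) ∧
    (Ideal.span (Set.range (MvPowerSeries.X : Fin n → MvPowerSeries (Fin n) k)))
        • perp I = perp I ∧
    perp I ≠ ⊥ := by
  have hpart1 : ∀ a : MvPowerSeries (Fin n) k, a ∉ I →
      contract a '' (perp I : Set (MvPolynomial (Fin n) k)) =
        (perp I : Set (MvPolynomial (Fin n) k)) := by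
    intro a ha
    apply Set.eq_of_subset_of_subset
    · rintro - ⟨F, hF, rfl⟩
      have : a • F ∈ perp I := Submodule.smul_mem (perp I) a hF
      rwa [smul_def] at this
    · intro F hF
      obtain ⟨G, hG, hGa⟩ := perp_divisible hdim hI ha hF
      exact ⟨G, hG, hGa⟩
  refine ⟨hpart1, ?_, ?_⟩
  · apply le_antisymm
    · refine Submodule.smul_le.mpr fun r _ F hF => ?_
      exact Submodule.smul_mem (perp I) r hF
    · intro F hF
      obtain ⟨i, hi⟩ := exists_X_not_mem hdim hI
      have hmem : F ∈ contract (MvPowerSeries.X i) ''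
          (perp I : Set (MvPolynomial (Fin n) k)) := by
        rw [hpart1 _ hi]
        exact hF
      obtain ⟨G, hG, hGa⟩ := hmem
      rw [← hGa, ← smul_def]
      exact Submodule.smul_mem_smul (Ideal.subset_span ⟨i, rfl⟩) hG
  · have h1 : (1 : MvPolynomial (Fin n) k) ∈ perp I := by
      refine mem_perp_iff_pairF.mpr fun g hg => ?_
      have hsupp : (1 : MvPolynomial (Fin n) k).support ⊆ {0} := by
        intro γ hγ
        rw [MvPolynomial.mem_support_iff] at hγ
        rw [Finset.mem_singleton]
        by_contra hne
        exact hγ (by rw [MvPolynomial.coeff_one, if_neg (fun h => hne h.symm)])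
      rw [pairF_eq_sum_subset 1 g hsupp, Finset.sum_singleton, MvPolynomial.coeff_one,
        if_pos rfl, one_mul, MvPowerSeries.coeff_zero_eq_constantCoeff_apply]
      exact mem_lowIdeal_one_iff.mp (proper_le_lowIdeal_one hI.ne_top hg)
    intro hbot
    rw [hbot] at h1
    exact one_ne_zero (Submodule.mem_bot _ |>.mp h1)
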